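/- arXiv:2212.13881 — 2 statements merged into one kernel-verified Lean document; each statement's English description precedes it below -/
import Mathlib

section
/- Let g : ℝ^k → ℝ be differentiable with g(0) = 0 and ∇g(0) ≠ 0, and let f(z) = g(Bz). Given n training samples (x_i, y_i), perform one step of gradient descent on (1/2)∑_i (y_i − f(x_i))² with learning rate η starting from B^(0) = 0, i.e. B^(1) = η ∇g(0) ∑_i y_i x_i^T. Then for every z ∈ ℝ^d, the matrix ∇f_1(z)∇f_1(z)^T (where f_1(z) = g(B^(1)z)) is proportional to (B^(1))^T B^(1), and both equal scalar multiples of (∑_i y_i x_i)(∑_i y_i x_i)^T. -/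
open Matrix

/-- Gradient of a scalar function on `Fin m → ℝ` in the standard basis. -/
noncomputable def grad {m : ℕ} (g : (Fin m → ℝ) → ℝ) (v : Fin m → ℝ) : Fin m → ℝ :=
  fun i => fderiv ℝ g v (Pi.single i 1)

lemma smul_vecMulVec_mulVec {k d : ℕ} (u v : Fin k → ℝ) (w : Fin d → ℝ) (η : ℝ) :
    (η • vecMulVec u w)ᵀ.mulVec v = (η * (u ⬝ᵥ v)) • w := by
  ext j
  simp [mulVec, dotProduct, vecMulVec, Finset.sum_mul, Finset.mul_sum]
  congr 1; ext i; ring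

theorem stmt2 {k d n : ℕ} (g : (Fin k → ℝ) → ℝ) (hg : Differentiable ℝ g)
    (hg0 : g 0 = 0) (hgrad0 : grad g 0 ≠ 0)
    (xs : Fin n → (Fin d → ℝ)) (ys : Fin n → ℝ) (η : ℝ)
    (B1 : Matrix (Fin k) (Fin d) ℝ)
    (hB1 : B1 = η • vecMulVec (grad g 0) (∑ i, ys i • xs i)) :
    ∀ z : Fin d → ℝ, ∃ c₁ c₂ : ℝ,
      vecMulVec (B1ᵀ.mulVec (grad g (B1.mulVec z)))
          (B1ᵀ.mulVec (grad g (B1.mulVec z)))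
        = c₁ • vecMulVec (∑ i, ys i • xs i) (∑ i, ys i • xs i)
      ∧ B1ᵀ * B1 = c₂ • vecMulVec (∑ i, ys i • xs i) (∑ i, ys i • xs i) := by
  intro z
  set u := grad g 0
  set w := ∑ i, ys i • xs i
  set v := grad g (B1.mulVec z)
  refine ⟨(η * (u ⬝ᵥ v))^2, η^2 * (u ⬝ᵥ u), ?_, ?_⟩
  · rw [hB1, smul_vecMulVec_mulVec]
    ext a b
    simp [vecMulVec]
    ring
  · rw [hB1]
    ext a b
    simp [Matrix.mul_apply, vecMulVec, dotProduct, Finset.sum_mul, Finset.mul_sum]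
    congr 1; ext i; ring
end

section
/- In the setting of the two-layer linear network with only B trainable, B^(0) = 0, and A having i.i.d. mean-zero unit-variance entries: if at step t the limits Z = lim_{k→∞} (1/√k) A B^(t) and M = lim_{k→∞} (B^(t))^T B^(t) exist and M = lim_{k→∞} ∇f_t ∇f_t^T, then after one more gradient descent step with learning rate η, lim_{k→∞} (B^(t+1))^T B^(t+1) = M + η Z^T y X^T + η X y^T Z − η M X X^T − η X X^T M + η² X y^T y X^T − η² X y^T Z X X^T − η² X X^T Z^T y X^T + η² X X^T M X X^T, and this equals lim_{k→∞} ∇f_{t+1} ∇f_{t+1}^T. (In particular the Deep Neural Feature Ansatz propagates inductively.) -/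
set_option maxHeartbeats 1600000

open Matrix Filter

private lemma sqrt_inv_sq (k : ℕ) : (Real.sqrt k)⁻¹ * (Real.sqrt k)⁻¹ = (k:ℝ)⁻¹ := by
  rw [← mul_inv, Real.mul_self_sqrt (Nat.cast_nonneg k)]

private lemma tmul {α : Type*} {l : Filter α} {p q r : ℕ}
    {f : α → Matrix (Fin p) (Fin q) ℝ} {g : α → Matrix (Fin q) (Fin r) ℝ}
    {a : Matrix (Fin p) (Fin q) ℝ} {b : Matrix (Fin q) (Fin r) ℝ}
    (hf : Tendsto f l (nhds a)) (hg : Tendsto g l (nhds b)) :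
    Tendsto (fun x => f x * g x) l (nhds (a * b)) := by
  have hc : Continuous fun pr : Matrix (Fin p) (Fin q) ℝ × Matrix (Fin q) (Fin r) ℝ =>
      pr.1 * pr.2 := Continuous.matrix_mul continuous_fst continuous_snd
  exact (hc.tendsto (a, b)).comp (hf.prodMk_nhds hg)

private lemma ttrans {α : Type*} {l : Filter α} {p q : ℕ}
    {f : α → Matrix (Fin p) (Fin q) ℝ} {a : Matrix (Fin p) (Fin q) ℝ}
    (hf : Tendsto f l (nhds a)) :
    Tendsto (fun x => (f x)ᵀ) l (nhds aᵀ) := by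
  have hc : Continuous fun m : Matrix (Fin p) (Fin q) ℝ => mᵀ :=
    Continuous.matrix_transpose continuous_id
  exact (hc.tendsto a).comp hf

/-- One step of gradient descent on the first layer of the two-layer linear network
`f(x) = (1/√k) A B x`:  `B ↦ B + (η/√k) Aᵀ (y − (1/√k) A B X) Xᵀ`. -/
noncomputable def Bnext {k d n : ℕ} (A : Matrix (Fin 1) (Fin k) ℝ)
    (B : Matrix (Fin k) (Fin d) ℝ) (X : Matrix (Fin d) (Fin n) ℝ)
    (y : Matrix (Fin 1) (Fin n) ℝ) (η : ℝ) : Matrix (Fin k) (Fin d) ℝ :=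
  B + (η / Real.sqrt k) • (Aᵀ * (y - (Real.sqrt k)⁻¹ • (A * B * X)) * Xᵀ)

private lemma expand1 {k d n : ℕ} (c t η : ℝ) (h : c * c = t)
    (A : Matrix (Fin 1) (Fin k) ℝ) (B : Matrix (Fin k) (Fin d) ℝ)
    (X : Matrix (Fin d) (Fin n) ℝ) (y : Matrix (Fin 1) (Fin n) ℝ) :
    (B + (η*c) • (Aᵀ * (y - c • (A*B*X)) * Xᵀ))ᵀ *
      (B + (η*c) • (Aᵀ * (y - c • (A*B*X)) * Xᵀ))
    = Bᵀ*B + η • ((c•(A*B))ᵀ * (y - (c•(A*B))*X) * Xᵀ)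
      + η • (X * (y - (c•(A*B))*X)ᵀ * (c•(A*B)))
      + η^2 • (X * (y - (c•(A*B))*X)ᵀ * ((t•(A*Aᵀ)) * ((y - (c•(A*B))*X) * Xᵀ))) := by
  subst h
  simp only [Matrix.smul_mul, Matrix.mul_smul, transpose_add, transpose_smul, transpose_mul,
    transpose_sub, transpose_transpose, Matrix.add_mul, Matrix.mul_add, Matrix.sub_mul,
    Matrix.mul_sub, smul_smul, smul_sub, smul_add, Matrix.mul_assoc]
  module

private lemma expand2 {k d n : ℕ} (c t η : ℝ) (h : c * c = t)
    (A : Matrix (Fin 1) (Fin k) ℝ) (B : Matrix (Fin k) (Fin d) ℝ)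
    (X : Matrix (Fin d) (Fin n) ℝ) (y : Matrix (Fin 1) (Fin n) ℝ) :
    t • ((B + (η*c) • (Aᵀ * (y - c • (A*B*X)) * Xᵀ))ᵀ * Aᵀ *
      (A * (B + (η*c) • (Aᵀ * (y - c • (A*B*X)) * Xᵀ))))
    = (c•(A*B) + η • ((t•(A*Aᵀ)) * (y - (c•(A*B))*X) * Xᵀ))ᵀ *
      (c•(A*B) + η • ((t•(A*Aᵀ)) * (y - (c•(A*B))*X) * Xᵀ)) := by
  subst h
  simp only [Matrix.smul_mul, Matrix.mul_smul, transpose_add, transpose_smul, transpose_mul,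
    transpose_sub, transpose_transpose, Matrix.add_mul, Matrix.mul_add, Matrix.sub_mul,
    Matrix.mul_sub, smul_smul, smul_sub, smul_add, Matrix.mul_assoc]
  module

theorem stmt5 {d n : ℕ} (X : Matrix (Fin d) (Fin n) ℝ) (y : Matrix (Fin 1) (Fin n) ℝ)
    (η : ℝ)
    (A : ∀ k : ℕ, Matrix (Fin 1) (Fin k) ℝ) (B : ∀ k : ℕ, Matrix (Fin k) (Fin d) ℝ)
    (Z : Matrix (Fin 1) (Fin d) ℝ) (M : Matrix (Fin d) (Fin d) ℝ)
    -- law of large numbers for the i.i.d. mean-zero unit-variance entries of A: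
    (hA : Tendsto (fun k : ℕ => ((k : ℝ)⁻¹) • (A k * (A k)ᵀ)) atTop (nhds 1))
    -- the limits Z = lim (1/√k) A B⁽ᵗ⁾ and M = lim (B⁽ᵗ⁾)ᵀ B⁽ᵗ⁾ exist:
    (hZ : Tendsto (fun k : ℕ => (Real.sqrt k)⁻¹ • (A k * B k)) atTop (nhds Z))
    (hM : Tendsto (fun k : ℕ => (B k)ᵀ * B k) atTop (nhds M))
    -- the ansatz at step t: M = lim ∇f_t ∇f_tᵀ = lim (1/k) Bᵀ Aᵀ A B:
    (hAnsatz : Tendsto (fun k : ℕ => ((k : ℝ)⁻¹) • ((B k)ᵀ * (A k)ᵀ * (A k * B k)))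
      atTop (nhds M)) :
    Tendsto (fun k : ℕ => (Bnext (A k) (B k) X y η)ᵀ * Bnext (A k) (B k) X y η) atTop
      (nhds (M + η • (Zᵀ * y * Xᵀ) + η • (X * yᵀ * Z) - η • (M * X * Xᵀ)
        - η • (X * Xᵀ * M) + η ^ 2 • (X * yᵀ * y * Xᵀ) - η ^ 2 • (X * yᵀ * Z * X * Xᵀ)
        - η ^ 2 • (X * Xᵀ * Zᵀ * y * Xᵀ) + η ^ 2 • (X * Xᵀ * M * X * Xᵀ)))
    ∧ Tendsto (fun k : ℕ => ((k : ℝ)⁻¹) •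
        ((Bnext (A k) (B k) X y η)ᵀ * (A k)ᵀ * (A k * Bnext (A k) (B k) X y η))) atTop
      (nhds (M + η • (Zᵀ * y * Xᵀ) + η • (X * yᵀ * Z) - η • (M * X * Xᵀ)
        - η • (X * Xᵀ * M) + η ^ 2 • (X * yᵀ * y * Xᵀ) - η ^ 2 • (X * yᵀ * Z * X * Xᵀ)
        - η ^ 2 • (X * Xᵀ * Zᵀ * y * Xᵀ) + η ^ 2 • (X * Xᵀ * M * X * Xᵀ))) := by
  have hM' : Zᵀ * Z = M := by
    have h1 : Tendsto (fun k : ℕ => ((Real.sqrt k)⁻¹ • (A k * B k))ᵀ *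
        ((Real.sqrt k)⁻¹ • (A k * B k))) atTop (nhds (Zᵀ * Z)) := tmul (ttrans hZ) hZ
    have h2 : (fun k : ℕ => ((Real.sqrt k)⁻¹ • (A k * B k))ᵀ * ((Real.sqrt k)⁻¹ • (A k * B k)))
        = fun k : ℕ => ((k : ℝ)⁻¹) • ((B k)ᵀ * (A k)ᵀ * (A k * B k)) := by
      funext k
      simp only [transpose_smul, transpose_mul, Matrix.smul_mul, Matrix.mul_smul,
        smul_smul, sqrt_inv_sq, Matrix.mul_assoc]
    exact tendsto_nhds_unique (h2 ▸ h1) hAnsatz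
  have hE : Tendsto (fun k : ℕ => y - ((Real.sqrt k)⁻¹ • (A k * B k)) * X) atTop
      (nhds (y - Z * X)) := tendsto_const_nhds.sub (tmul hZ tendsto_const_nhds)
  constructor
  · have key : (fun k : ℕ => (Bnext (A k) (B k) X y η)ᵀ * Bnext (A k) (B k) X y η)
        = fun k : ℕ => (B k)ᵀ * B k
          + η • (((Real.sqrt k)⁻¹ • (A k * B k))ᵀ *
              (y - ((Real.sqrt k)⁻¹ • (A k * B k)) * X) * Xᵀ)
          + η • (X * (y - ((Real.sqrt k)⁻¹ • (A k * B k)) * X)ᵀ *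
              ((Real.sqrt k)⁻¹ • (A k * B k)))
          + η ^ 2 • (X * (y - ((Real.sqrt k)⁻¹ • (A k * B k)) * X)ᵀ *
              ((((k : ℝ)⁻¹) • (A k * (A k)ᵀ)) *
                ((y - ((Real.sqrt k)⁻¹ • (A k * B k)) * X) * Xᵀ))) := by
      funext k
      have hB : Bnext (A k) (B k) X y η
          = B k + (η * (Real.sqrt k)⁻¹) • ((A k)ᵀ *
              (y - (Real.sqrt k)⁻¹ • (A k * B k * X)) * Xᵀ) := by
        rw [Bnext, div_eq_mul_inv]
      rw [hB]
      exact expand1 _ _ _ (sqrt_inv_sq k) _ _ _ _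
    have h1 : Tendsto (fun k : ℕ => ((Real.sqrt k)⁻¹ • (A k * B k))ᵀ *
        (y - ((Real.sqrt k)⁻¹ • (A k * B k)) * X) * Xᵀ) atTop
        (nhds (Zᵀ * (y - Z * X) * Xᵀ)) := tmul (tmul (ttrans hZ) hE) tendsto_const_nhds
    have h2 : Tendsto (fun k : ℕ => X * (y - ((Real.sqrt k)⁻¹ • (A k * B k)) * X)ᵀ *
        ((Real.sqrt k)⁻¹ • (A k * B k))) atTop
        (nhds (X * (y - Z * X)ᵀ * Z)) := tmul (tmul tendsto_const_nhds (ttrans hE)) hZ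
    have h3 : Tendsto (fun k : ℕ => X * (y - ((Real.sqrt k)⁻¹ • (A k * B k)) * X)ᵀ *
        ((((k : ℝ)⁻¹) • (A k * (A k)ᵀ)) *
          ((y - ((Real.sqrt k)⁻¹ • (A k * B k)) * X) * Xᵀ))) atTop
        (nhds (X * (y - Z * X)ᵀ * ((1 : Matrix (Fin 1) (Fin 1) ℝ) * ((y - Z * X) * Xᵀ)))) :=
      tmul (tmul tendsto_const_nhds (ttrans hE)) (tmul hA (tmul hE tendsto_const_nhds))
    have h : Tendsto (fun k : ℕ => (B k)ᵀ * B k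
          + η • (((Real.sqrt k)⁻¹ • (A k * B k))ᵀ *
              (y - ((Real.sqrt k)⁻¹ • (A k * B k)) * X) * Xᵀ)
          + η • (X * (y - ((Real.sqrt k)⁻¹ • (A k * B k)) * X)ᵀ *
              ((Real.sqrt k)⁻¹ • (A k * B k)))
          + η ^ 2 • (X * (y - ((Real.sqrt k)⁻¹ • (A k * B k)) * X)ᵀ *
              ((((k : ℝ)⁻¹) • (A k * (A k)ᵀ)) *
                ((y - ((Real.sqrt k)⁻¹ • (A k * B k)) * X) * Xᵀ)))) atTop
        (nhds (M + η • (Zᵀ * (y - Z * X) * Xᵀ) + η • (X * (y - Z * X)ᵀ * Z)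
          + η ^ 2 • (X * (y - Z * X)ᵀ * ((1 : Matrix (Fin 1) (Fin 1) ℝ) * ((y - Z * X) * Xᵀ))))) :=
      ((hM.add (h1.const_smul η)).add (h2.const_smul η)).add (h3.const_smul (η ^ 2))
    have hEq : M + η • (Zᵀ * (y - Z * X) * Xᵀ) + η • (X * (y - Z * X)ᵀ * Z)
          + η ^ 2 • (X * (y - Z * X)ᵀ * ((1 : Matrix (Fin 1) (Fin 1) ℝ) * ((y - Z * X) * Xᵀ)))
        = M + η • (Zᵀ * y * Xᵀ) + η • (X * yᵀ * Z) - η • (M * X * Xᵀ)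
          - η • (X * Xᵀ * M) + η ^ 2 • (X * yᵀ * y * Xᵀ) - η ^ 2 • (X * yᵀ * Z * X * Xᵀ)
          - η ^ 2 • (X * Xᵀ * Zᵀ * y * Xᵀ) + η ^ 2 • (X * Xᵀ * M * X * Xᵀ) := by
      rw [← hM']
      simp only [Matrix.one_mul, Matrix.mul_sub, Matrix.sub_mul, transpose_sub, transpose_mul,
        transpose_transpose, smul_sub, smul_add, Matrix.mul_assoc]
      module
    rw [key]
    exact hEq ▸ h
  · have key : (fun k : ℕ => ((k : ℝ)⁻¹) •
        ((Bnext (A k) (B k) X y η)ᵀ * (A k)ᵀ * (A k * Bnext (A k) (B k) X y η)))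
        = fun k : ℕ =>
          ((Real.sqrt k)⁻¹ • (A k * B k) + η • ((((k : ℝ)⁻¹) • (A k * (A k)ᵀ)) *
              (y - ((Real.sqrt k)⁻¹ • (A k * B k)) * X) * Xᵀ))ᵀ *
          ((Real.sqrt k)⁻¹ • (A k * B k) + η • ((((k : ℝ)⁻¹) • (A k * (A k)ᵀ)) *
              (y - ((Real.sqrt k)⁻¹ • (A k * B k)) * X) * Xᵀ)) := by
      funext k
      have hB : Bnext (A k) (B k) X y η
          = B k + (η * (Real.sqrt k)⁻¹) • ((A k)ᵀ *
              (y - (Real.sqrt k)⁻¹ • (A k * B k * X)) * Xᵀ) := by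
        rw [Bnext, div_eq_mul_inv]
      rw [hB]
      exact expand2 _ _ _ (sqrt_inv_sq k) _ _ _ _
    have hV : Tendsto (fun k : ℕ => (Real.sqrt k)⁻¹ • (A k * B k)
          + η • ((((k : ℝ)⁻¹) • (A k * (A k)ᵀ)) *
              (y - ((Real.sqrt k)⁻¹ • (A k * B k)) * X) * Xᵀ)) atTop
        (nhds (Z + η • ((1 : Matrix (Fin 1) (Fin 1) ℝ) * (y - Z * X) * Xᵀ))) :=
      hZ.add ((tmul (tmul hA hE) tendsto_const_nhds).const_smul η)
    have h := tmul (ttrans hV) hV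
    have hEq : (Z + η • ((1 : Matrix (Fin 1) (Fin 1) ℝ) * (y - Z * X) * Xᵀ))ᵀ *
          (Z + η • ((1 : Matrix (Fin 1) (Fin 1) ℝ) * (y - Z * X) * Xᵀ))
        = M + η • (Zᵀ * y * Xᵀ) + η • (X * yᵀ * Z) - η • (M * X * Xᵀ)
          - η • (X * Xᵀ * M) + η ^ 2 • (X * yᵀ * y * Xᵀ) - η ^ 2 • (X * yᵀ * Z * X * Xᵀ)
          - η ^ 2 • (X * Xᵀ * Zᵀ * y * Xᵀ) + η ^ 2 • (X * Xᵀ * M * X * Xᵀ) := by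
      rw [← hM']
      simp only [Matrix.one_mul, Matrix.mul_sub, Matrix.sub_mul, Matrix.mul_add,
        Matrix.add_mul, transpose_sub, transpose_mul, transpose_add, transpose_smul,
        transpose_transpose, smul_sub, smul_add, Matrix.smul_mul, Matrix.mul_smul,
        smul_smul, Matrix.mul_assoc]
      module
    rw [key]
    exact hEq ▸ h
end
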